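/- arXiv:1212.3681 — 4 statements merged into one kernel-verified Lean document; each statement's English description precedes it below -/
import Mathlib

section
/- Let G be a group with a prefiltration G_• of degree at most s, meaning G ⊇ G₀ ⊇ G₁ ⊇ ⋯ ⊇ G_s ⊇ G_{s+1} = {1} with [G_i, G_j] ⊆ G_{i+j} for all i, j ≥ 0. If g, h ∈ poly(Z, G_•) agree at the s+1 values n = 0, 1, …, s, then g(n) = h(n) for all n ∈ Z. -/
/-- The discrete derivative `∂_h g (n) = g(n+h) g(n)⁻¹`. -/
def discDeriv {G : Type*} [Group G] (h : ℤ) (g : ℤ → G) : ℤ → G :=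
  fun n => g (n + h) * (g n)⁻¹

/-- `g : ℤ → G` is a polynomial sequence adapted to `Gf` if every iterated discrete
derivative of order `i` takes values in `Gf i`. -/
def IsPolySeq {G : Type*} [Group G] (Gf : ℕ → Subgroup G) (g : ℤ → G) : Prop :=
  ∀ (hs : List ℤ) (n : ℤ), (hs.foldr discDeriv g) n ∈ Gf hs.length

/-- The binomial coefficient `C(n, k)` for an integer `n` (the division is exact). -/
def zchoose (n : ℤ) (k : ℕ) : ℤ :=
  (∏ i ∈ Finset.range k, (n - (i : ℤ))) / (k.factorial : ℤ)

/-! A sequence is recovered from its first difference `∂₁g` and a single value, so by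
induction on `k` it is recovered from `∂₁ᵏ g` and `k` consecutive values. For a polynomial
sequence with `G_{s+1} = 1` the derivative `∂₁^{s+1} g` is trivial, hence `g` is determined
by `g(0), …, g(s)`. -/

section DiscDeriv

variable {G : Type*} [Group G]

lemma foldr_replicate_discDeriv (k : ℕ) (h : ℤ) (g : ℤ → G) :
    (List.replicate k h).foldr discDeriv g = (discDeriv h)^[k] g := by
  induction k with
  | zero => rfl
  | succ k ih => rw [List.replicate_succ, List.foldr_cons, ih, Function.iterate_succ_apply']

lemma eq_of_discDeriv_eq {g h : ℤ → G} (hd : discDeriv 1 g = discDeriv 1 h) {n₀ : ℤ}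
    (h₀ : g n₀ = h n₀) : g = h := by
  have step : ∀ f : ℤ → G, ∀ n, f (n + 1) = discDeriv 1 f n * f n := fun f n => by
    simp [discDeriv]
  funext n
  induction n using Int.inductionOn' (b := n₀) with
  | zero => exact h₀
  | succ n _ ih => rw [step g, step h, hd, ih]
  | pred n _ ih =>
    have hg := step g (n - 1)
    have hh := step h (n - 1)
    rw [sub_add_cancel] at hg hh
    rw [hd, ih, hh] at hg
    exact (mul_left_cancel hg).symm

lemma eq_of_iterate_discDeriv_eq {k : ℕ} {g h : ℤ → G}
    (hk : (discDeriv 1)^[k] g = (discDeriv 1)^[k] h) {n₀ : ℤ}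
    (hagree : ∀ j < k, g (n₀ + j) = h (n₀ + j)) : g = h := by
  induction k generalizing g h with
  | zero => exact hk
  | succ k ih =>
    refine eq_of_discDeriv_eq (n₀ := n₀) (ih hk fun j hj => ?_)
      (by simpa using hagree 0 (by omega))
    have e : n₀ + j + 1 = n₀ + ↑(j + 1) := by push_cast; ring
    simp only [discDeriv, e, hagree j (by omega), hagree (j + 1) (by omega)]

end DiscDeriv

lemma IsPolySeq.iterate_discDeriv_mem {G : Type*} [Group G] {Gf : ℕ → Subgroup G}
    {g : ℤ → G} (hg : IsPolySeq Gf g) (k : ℕ) (n : ℤ) : (discDeriv 1)^[k] g n ∈ Gf k := by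
  simpa [foldr_replicate_discDeriv] using hg (List.replicate k 1) n

lemma IsPolySeq.iterate_discDeriv_eq_one {G : Type*} [Group G] {Gf : ℕ → Subgroup G}
    {g : ℤ → G} (hg : IsPolySeq Gf g) {k : ℕ} (hk : Gf k = ⊥) :
    (discDeriv 1)^[k] g = 1 := by
  funext n
  simpa [hk] using hg.iterate_discDeriv_mem k n

theorem polyseq_eq_of_agree_on_initial_general {G : Type*} [Group G] (s : ℕ) (Gf : ℕ → Subgroup G)
    (hbot : ∀ i, s < i → Gf i = ⊥)
    (g h : ℤ → G) (hg : IsPolySeq Gf g) (hh : IsPolySeq Gf h)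
    (hagree : ∀ n : ℕ, n ≤ s → g (n : ℤ) = h (n : ℤ)) :
    ∀ n : ℤ, g n = h n := by
  have htop := hbot (s + 1) (Nat.lt_succ_self s)
  have hgh : g = h := by
    refine eq_of_iterate_discDeriv_eq (k := s + 1) (n₀ := 0) ?_ fun j hj => ?_
    · rw [hg.iterate_discDeriv_eq_one htop, hh.iterate_discDeriv_eq_one htop]
    · simpa using hagree j (Nat.lt_succ_iff.mp hj)
  exact congrFun hgh

/-- two polynomial sequences with respect to a prefiltration of degree at
most `s` that agree at `n = 0, 1, …, s` agree everywhere. -/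
theorem polyseq_eq_of_agree_on_initial {G : Type*} [Group G] (s : ℕ) (Gf : ℕ → Subgroup G)
    (hmono : ∀ i, Gf (i + 1) ≤ Gf i)
    (hbot : ∀ i, s < i → Gf i = ⊥)
    (hcomm : ∀ i j, ⁅Gf i, Gf j⁆ ≤ Gf (i + j))
    (g h : ℤ → G) (hg : IsPolySeq Gf g) (hh : IsPolySeq Gf h)
    (hagree : ∀ n : ℕ, n ≤ s → g (n : ℤ) = h (n : ℤ)) :
    ∀ n : ℤ, g n = h n :=
  polyseq_eq_of_agree_on_initial_general s Gf hbot g h hg hh hagree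
end

section
/- Let G be a group with a prefiltration G_• of degree at most s, and let g ∈ poly(Z, G_•). Then there exist unique coefficients g_i ∈ G_i for 0 ≤ i ≤ s such that g(n) = g₀ g₁^n g₂^{C(n,2)} ⋯ g_s^{C(n,s)} for all n ∈ Z. -/
/-!
Polynomial sequences form a group (Lazard–Leibman): the discrete derivative of a product
or of a commutator is a product of commutators of lower-order derivatives, so an induction on
the order of the derivatives, with the filtration levels shifted, gives closure under products.

The Taylor coefficients are then peeled off one at a time. If a polynomial remainder `r`
vanishes at `0, …, k - 1`, then `r k = (∂₁ᵏ r) 0 ∈ G_k`, and `n ↦ (r k)^(-C(n, k)) * r n` is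
again polynomial (its exponent is killed by any `k + 1` differences) and vanishes at
`0, …, k`. After `s + 1` steps the remainder vanishes at `0, …, s` and its `(s + 1)`-st
derivative lies in `G_{s+1} = 1`, so it is trivial. Uniqueness holds because at
`n = 0, …, s` the expansion is triangular: `C(n, i) = 0` for `i > n` and `C(n, n) = 1`.
-/

open scoped commutatorElement fwdDiff

lemma zchoose_eq_ringChoose (n : ℤ) (k : ℕ) : zchoose n k = Ring.choose n k := by
  rw [zchoose, ← descPochhammer_eval_eq_prod_range, Polynomial.eval_eq_smeval,
    Ring.descPochhammer_eq_factorial_smul_choose, nsmul_eq_mul,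
    Int.mul_ediv_cancel_left _ (by positivity)]

lemma zchoose_natCast (n k : ℕ) : zchoose n k = n.choose k := by
  rw [zchoose_eq_ringChoose, Ring.choose_natCast]

section FwdDiff

variable {M : Type*} [AddCommGroup M]

lemma fwdDiff_comm (a b : ℤ) (f : ℤ → M) : Δ_[a] (Δ_[b] f) = Δ_[b] (Δ_[a] f) := by
  funext n
  simp only [fwdDiff, add_right_comm n b a]
  abel

lemma fwdDiff_eq_zero_of_fwdDiff_one_eq_zero {f : ℤ → M} (hf : Δ_[1] f = 0) (a : ℤ) :
    Δ_[a] f = 0 := by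
  have hper : Function.Periodic f 1 := fun n => sub_eq_zero.mp (congrFun hf n)
  funext n
  simpa [fwdDiff, sub_eq_zero] using hper.int_mul a n

lemma iterate_fwdDiff_one_foldr_eq_zero {f : ℤ → M} :
    ∀ (hs : List ℤ) (j : ℕ),
      (Δ_[1])^[j + hs.length] f = 0 → (Δ_[1])^[j] (hs.foldr fwdDiff f) = 0
  | [], _, hf => hf
  | a :: hs, j, hf => by
    have hcomm : Function.Commute (fwdDiff (1 : ℤ) : (ℤ → M) → ℤ → M) (fwdDiff a) :=
      fun f => fwdDiff_comm 1 a f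
    rw [List.foldr_cons, (hcomm.iterate_left j).eq]
    refine fwdDiff_eq_zero_of_fwdDiff_one_eq_zero ?_ a
    rw [← Function.iterate_succ_apply' (Δ_[1])]
    exact iterate_fwdDiff_one_foldr_eq_zero hs (j + 1)
      (by rwa [List.length_cons, ← add_assoc, add_right_comm] at hf)

lemma foldr_fwdDiff_eq_zero {f : ℤ → M} {k : ℕ} (hf : (Δ_[1])^[k] f = 0) {hs : List ℤ}
    (hk : k ≤ hs.length) : hs.foldr fwdDiff f = 0 := by
  obtain ⟨j, hj⟩ := Nat.exists_eq_add_of_le hk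
  refine iterate_fwdDiff_one_foldr_eq_zero hs 0 ?_
  rw [zero_add, hj, add_comm, Function.iterate_add_apply, hf]
  exact Function.iterate_fixed (funext fun _ => sub_self 0) j

end FwdDiff

lemma iterate_fwdDiff_one_ringChoose (k : ℕ) :
    (Δ_[1])^[k + 1] (fun n : ℤ => Ring.choose n k) = 0 := by
  induction k with
  | zero => funext n; simp [fwdDiff]
  | succ k ih =>
    have hpascal : Δ_[1] (fun n : ℤ => Ring.choose n (k + 1)) = fun n => Ring.choose n k := by
      funext n
      simp [fwdDiff, Ring.choose_succ_succ]
    rw [Function.iterate_succ_apply, hpascal, ih]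

section PolySeq

variable {G : Type*} [Group G]

lemma discDeriv_zpow (c : G) (a : ℤ) (E : ℤ → ℤ) :
    discDeriv a (fun n => c ^ E n) = fun n => c ^ Δ_[a] E n := by
  funext n
  simp [discDeriv, fwdDiff, zpow_sub]

lemma foldr_discDeriv_zpow (c : G) (hs : List ℤ) (E : ℤ → ℤ) :
    hs.foldr discDeriv (fun n => c ^ E n) = fun n => c ^ hs.foldr fwdDiff E n := by
  induction hs with
  | nil => rfl
  | cons a hs ih => rw [List.foldr_cons, ih, discDeriv_zpow, List.foldr_cons]

lemma discDeriv_mul (a : ℤ) (g h : ℤ → G) :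
    discDeriv a (g * h) = discDeriv a g * ⁅g, discDeriv a h⁆ * discDeriv a h := by
  funext n
  simp only [discDeriv, Pi.mul_apply, commutatorElement_def, Pi.inv_apply]
  group

-- `discDeriv a h * h` is the shift `n ↦ h (n + a)`
lemma discDeriv_commutator (a : ℤ) (g h : ℤ → G) :
    discDeriv a ⁅g, h⁆ =
      ⁅discDeriv a g, ⁅g, discDeriv a h * h⁆⁆ * ⁅g, discDeriv a h⁆ *
        ⁅discDeriv a h, ⁅g, h⁆⁆ * ⁅⁅g, h⁆, ⁅discDeriv a g, discDeriv a h * h⁆⁆ *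
          ⁅discDeriv a g, discDeriv a h * h⁆ := by
  funext n
  simp only [discDeriv, Pi.mul_apply, commutatorElement_def, Pi.inv_apply]
  group

variable (Gf : ℕ → Subgroup G)

/-- The derivatives of `g` of order `i ≤ N` take values in `Gf (m + i)` (`isPolySeqUpTo_iff`).
Bounding the order is what makes the Lazard–Leibman induction work. -/
def IsPolySeqUpTo : ℕ → ℕ → (ℤ → G) → Prop
  | m, 0, g => ∀ n, g n ∈ Gf m
  | m, N + 1, g => (∀ n, g n ∈ Gf m) ∧ ∀ a, IsPolySeqUpTo (m + 1) N (discDeriv a g)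

variable {Gf}

lemma IsPolySeqUpTo.mem {m N : ℕ} {g : ℤ → G} (hg : IsPolySeqUpTo Gf m N g) (n : ℤ) :
    g n ∈ Gf m := by
  cases N with
  | zero => exact hg n
  | succ N => exact hg.1 n

lemma IsPolySeqUpTo.of_succ {m N : ℕ} {g : ℤ → G} (hg : IsPolySeqUpTo Gf m (N + 1) g) :
    IsPolySeqUpTo Gf m N g := by
  induction N generalizing m g with
  | zero => exact hg.1
  | succ N ih => exact ⟨hg.1, fun a => ih (hg.2 a)⟩

lemma IsPolySeqUpTo.mono (hGf : Antitone Gf) {m m' N : ℕ} {g : ℤ → G} (hm : m' ≤ m)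
    (hg : IsPolySeqUpTo Gf m N g) : IsPolySeqUpTo Gf m' N g := by
  induction N generalizing m m' g with
  | zero => exact fun n => hGf hm (hg n)
  | succ N ih => exact ⟨fun n => hGf hm (hg.1 n), fun a => ih (by omega) (hg.2 a)⟩

lemma isPolySeqUpTo_iff {m N : ℕ} {g : ℤ → G} :
    IsPolySeqUpTo Gf m N g ↔
      ∀ hs : List ℤ, hs.length ≤ N → ∀ n,
        hs.foldr discDeriv g n ∈ Gf (m + hs.length) := by
  induction N generalizing m g with
  | zero => simp [IsPolySeqUpTo]
  | succ N ih =>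
    simp only [IsPolySeqUpTo, ih]
    constructor
    · rintro ⟨hg, hder⟩ hs hlen n
      rcases hs.eq_nil_or_concat' with rfl | ⟨hs, a, rfl⟩
      · exact hg n
      · simpa [List.foldr_append, add_right_comm, add_assoc] using
          hder a hs (by simpa using hlen) n
    · intro h
      refine ⟨fun n => by simpa using h [] (Nat.zero_le _) n, fun a hs hlen n => ?_⟩
      simpa [List.foldr_append, add_right_comm, add_assoc] using
        h (hs ++ [a]) (by simpa using hlen) n

lemma isPolySeq_iff_forall_isPolySeqUpTo {g : ℤ → G} :
    IsPolySeq Gf g ↔ ∀ N, IsPolySeqUpTo Gf 0 N g := by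
  simp only [isPolySeqUpTo_iff, zero_add]
  exact ⟨fun hg _ hs _ => hg hs, fun hg hs => hg hs.length hs le_rfl⟩

end PolySeq

section LazardLeibman

variable {G : Type*} [Group G] {Gf : ℕ → Subgroup G}

lemma IsPolySeqUpTo.mul_succ (hGf : Antitone Gf) {N : ℕ}
    (ihmul : ∀ m (g h : ℤ → G), IsPolySeqUpTo Gf m N g → IsPolySeqUpTo Gf m N h →
      IsPolySeqUpTo Gf m N (g * h))
    (ihcomm : ∀ m m' (g h : ℤ → G), IsPolySeqUpTo Gf m N g → IsPolySeqUpTo Gf m' N h →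
      IsPolySeqUpTo Gf (m + m') N ⁅g, h⁆)
    {m : ℕ} {g h : ℤ → G} (hg : IsPolySeqUpTo Gf m (N + 1) g)
    (hh : IsPolySeqUpTo Gf m (N + 1) h) : IsPolySeqUpTo Gf m (N + 1) (g * h) := by
  refine ⟨fun n => mul_mem (hg.mem n) (hh.mem n), fun a => ?_⟩
  rw [discDeriv_mul]
  have hcomm' : IsPolySeqUpTo Gf (m + 1) N ⁅g, discDeriv a h⁆ :=
    (ihcomm _ _ _ _ hg.of_succ (hh.2 a)).mono hGf (by omega)
  exact ihmul _ _ _ (ihmul _ _ _ (hg.2 a) hcomm') (hh.2 a)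

lemma IsPolySeqUpTo.commutator_succ (hGf : Antitone Gf)
    (hcomm : ∀ i j, ⁅Gf i, Gf j⁆ ≤ Gf (i + j)) {N : ℕ}
    (ihmul : ∀ m (g h : ℤ → G), IsPolySeqUpTo Gf m N g → IsPolySeqUpTo Gf m N h →
      IsPolySeqUpTo Gf m N (g * h))
    (ihcomm : ∀ m m' (g h : ℤ → G), IsPolySeqUpTo Gf m N g → IsPolySeqUpTo Gf m' N h →
      IsPolySeqUpTo Gf (m + m') N ⁅g, h⁆)
    {m m' : ℕ} {g h : ℤ → G} (hg : IsPolySeqUpTo Gf m (N + 1) g)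
    (hh : IsPolySeqUpTo Gf m' (N + 1) h) : IsPolySeqUpTo Gf (m + m') (N + 1) ⁅g, h⁆ := by
  refine ⟨fun n => hcomm m m' (Subgroup.commutator_mem_commutator (hg.mem n) (hh.mem n)),
    fun a => ?_⟩
  rw [discDeriv_commutator]
  have hγ := hg.2 a
  have hη := hh.2 a
  have hηh : IsPolySeqUpTo Gf m' N (discDeriv a h * h) :=
    ihmul _ _ _ (hη.mono hGf (by omega)) hh.of_succ
  have lift : ∀ {k : ℕ} {f : ℤ → G}, m + m' + 1 ≤ k → IsPolySeqUpTo Gf k N f →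
      IsPolySeqUpTo Gf (m + m' + 1) N f := fun hk hf => hf.mono hGf hk
  have hgh := ihcomm _ _ _ _ hg.of_succ hh.of_succ
  have hγηh := ihcomm _ _ _ _ hγ hηh
  have h₁ := lift (by omega) (ihcomm _ _ _ _ hγ (ihcomm _ _ _ _ hg.of_succ hηh))
  have h₂ := lift (by omega) (ihcomm _ _ _ _ hg.of_succ hη)
  have h₃ := lift (by omega) (ihcomm _ _ _ _ hη hgh)
  have h₄ := lift (by omega) (ihcomm _ _ _ _ hgh hγηh)
  exact ihmul _ _ _ (ihmul _ _ _ (ihmul _ _ _ (ihmul _ _ _ h₁ h₂) h₃) h₄)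
    (lift (by omega) hγηh)

lemma isPolySeqUpTo_mul_and_commutator (hGf : Antitone Gf)
    (hcomm : ∀ i j, ⁅Gf i, Gf j⁆ ≤ Gf (i + j)) (N : ℕ) :
    (∀ m (g h : ℤ → G), IsPolySeqUpTo Gf m N g → IsPolySeqUpTo Gf m N h →
      IsPolySeqUpTo Gf m N (g * h)) ∧
    (∀ m m' (g h : ℤ → G), IsPolySeqUpTo Gf m N g → IsPolySeqUpTo Gf m' N h →
      IsPolySeqUpTo Gf (m + m') N ⁅g, h⁆) := by
  induction N with
  | zero =>
    exact ⟨fun _ _ _ hg hh n => mul_mem (hg n) (hh n), fun _ _ _ _ hg hh n =>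
      hcomm _ _ (Subgroup.commutator_mem_commutator (hg n) (hh n))⟩
  | succ N ih =>
    exact ⟨fun _ _ _ hg hh => IsPolySeqUpTo.mul_succ hGf ih.1 ih.2 hg hh,
      fun _ _ _ _ hg hh => IsPolySeqUpTo.commutator_succ hGf hcomm ih.1 ih.2 hg hh⟩

theorem IsPolySeq.mul (hGf : Antitone Gf) (hcomm : ∀ i j, ⁅Gf i, Gf j⁆ ≤ Gf (i + j))
    {g h : ℤ → G} (hg : IsPolySeq Gf g) (hh : IsPolySeq Gf h) : IsPolySeq Gf (g * h) := by
  rw [isPolySeq_iff_forall_isPolySeqUpTo] at *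
  exact fun N => (isPolySeqUpTo_mul_and_commutator hGf hcomm N).1 0 g h (hg N) (hh N)

end LazardLeibman

lemma List.foldr_replicate_eq_iterate {α β : Type*} (f : α → β → β) (a : α) (k : ℕ)
    (b : β) : (List.replicate k a).foldr f b = (f a)^[k] b := by
  induction k with
  | zero => rfl
  | succ k ih => rw [List.replicate_succ, List.foldr_cons, ih, Function.iterate_succ_apply']

section Values

variable {G : Type*} [Group G] {Gf : ℕ → Subgroup G}

lemma isPolySeq_zpow (hGf : Antitone Gf) {k : ℕ} {c : G} (hc : c ∈ Gf k) {E : ℤ → ℤ}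
    (hE : (Δ_[1])^[k + 1] E = 0) : IsPolySeq Gf (fun n => c ^ E n) := by
  intro hs n
  rw [foldr_discDeriv_zpow]
  rcases le_or_gt hs.length k with hlen | hlen
  · exact zpow_mem (hGf hlen hc) _
  · simp [foldr_fwdDiff_eq_zero hE hlen, one_mem]

lemma IsPolySeq.iterate_mem {g : ℤ → G} (hg : IsPolySeq Gf g) (a : ℤ) (k : ℕ) (n : ℤ) :
    (discDeriv a)^[k] g n ∈ Gf k := by
  simpa [List.foldr_replicate_eq_iterate] using hg (List.replicate k a) n

lemma iterate_discDeriv_one_apply_zero {k : ℕ} {g : ℤ → G}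
    (hg : ∀ j : ℕ, j < k → g j = 1) : (discDeriv 1)^[k] g 0 = g k := by
  induction k generalizing g with
  | zero => rfl
  | succ k ih =>
    have hg' : ∀ j : ℕ, j < k → discDeriv 1 g j = 1 := fun j hj => by
      have hsucc := hg (j + 1) (by omega)
      push_cast at hsucc
      simp [discDeriv, hg j (by omega), hsucc]
    rw [Function.iterate_succ_apply, ih hg', discDeriv, hg k (by omega), inv_one, mul_one,
      Nat.cast_succ]

lemma IsPolySeq.apply_mem_of_forall_lt_eq_one {g : ℤ → G} (hg : IsPolySeq Gf g) {k : ℕ}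
    (h : ∀ j : ℕ, j < k → g j = 1) : g k ∈ Gf k := by
  simpa [iterate_discDeriv_one_apply_zero h] using hg.iterate_mem 1 k 0

lemma IsPolySeq.eq_one_of_forall_lt_eq_one {s : ℕ} (hs : Gf (s + 1) = ⊥) {g : ℤ → G}
    (hg : IsPolySeq Gf g) (h : ∀ j : ℕ, j < s + 1 → g j = 1) : g = 1 := by
  suffices ∀ k ≤ s + 1, (discDeriv 1)^[k] g = 1 from this 0 (Nat.zero_le _)
  refine fun k hk => Nat.decreasingInduction (fun k hk ih => ?_) ?_ hk
  · -- the next derivative vanishes, so this one is constant, equal to its value `g k` at `0`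
    have hper : Function.Periodic ((discDeriv 1)^[k] g) 1 := fun n => by
      simpa [Function.iterate_succ_apply', discDeriv, mul_inv_eq_one] using congrFun ih n
    funext n
    have hconst : (discDeriv 1)^[k] g n = (discDeriv 1)^[k] g 0 := by
      simpa using hper.int_mul_eq n
    rw [hconst, iterate_discDeriv_one_apply_zero fun j hj => h j (by omega), h k hk,
      Pi.one_apply]
  · funext n
    simpa [hs] using hg.iterate_mem 1 (s + 1) n

end Values

section TaylorProd

variable {G : Type*} [Group G]

def taylorProd (c : ℕ → G) (k : ℕ) (n : ℤ) : G :=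
  ((List.range k).map fun i => c i ^ zchoose n i).prod

lemma taylorProd_succ (c : ℕ → G) (k : ℕ) (n : ℤ) :
    taylorProd c (k + 1) n = taylorProd c k n * c k ^ zchoose n k :=
  List.prod_range_succ _ k

lemma taylorProd_congr {c d : ℕ → G} {k : ℕ} (h : ∀ i < k, c i = d i) :
    taylorProd c k = taylorProd d k :=
  funext fun n => congrArg List.prod <| List.map_congr_left fun i hi => by
    rw [h i (List.mem_range.mp hi)]

lemma taylorProd_natCast_of_lt (c : ℕ → G) {j k : ℕ} (hjk : j < k) :
    taylorProd c k j = taylorProd c j j * c j := by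
  induction k, hjk using Nat.le_induction with
  | base => rw [taylorProd_succ, zchoose_natCast, Nat.choose_self, Nat.cast_one, zpow_one]
  | succ k hk ih =>
    rw [taylorProd_succ, zchoose_natCast, Nat.choose_eq_zero_of_lt hk, ih]
    simp

lemma eq_of_taylorProd_eq {c d : ℕ → G} {k : ℕ}
    (h : ∀ j : ℕ, j < k → taylorProd c k j = taylorProd d k j) : ∀ i < k, c i = d i := by
  intro i
  induction i using Nat.strong_induction_on with
  | _ i ih =>
    intro hi
    have hprefix : taylorProd c i = taylorProd d i :=
      taylorProd_congr fun j hj => ih j hj (by omega)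
    have hi' := h i hi
    rwa [taylorProd_natCast_of_lt c hi, taylorProd_natCast_of_lt d hi, hprefix,
      mul_right_inj] at hi'

variable {Gf : ℕ → Subgroup G}

lemma exists_eq_taylorProd_mul (hGf : Antitone Gf)
    (hcomm : ∀ i j, ⁅Gf i, Gf j⁆ ≤ Gf (i + j)) {g : ℤ → G} (hg : IsPolySeq Gf g)
    (k : ℕ) :
    ∃ c : ℕ → G, (∀ i < k, c i ∈ Gf i) ∧ ∃ r : ℤ → G, IsPolySeq Gf r ∧
      (∀ j : ℕ, j < k → r j = 1) ∧ ∀ n, g n = taylorProd c k n * r n := by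
  induction k with
  | zero => exact ⟨1, by simp, g, hg, by simp, fun n => by simp [taylorProd]⟩
  | succ k ih =>
    obtain ⟨c, hc, r, hr, hr1, hgr⟩ := ih
    have hrk : r k ∈ Gf k := hr.apply_mem_of_forall_lt_eq_one hr1
    let q : ℤ → G := fun n => (r k)⁻¹ ^ zchoose n k
    have hq : IsPolySeq Gf q := isPolySeq_zpow hGf (inv_mem hrk) <| by
      simpa only [zchoose_eq_ringChoose] using iterate_fwdDiff_one_ringChoose k
    refine ⟨Function.update c k (r k), fun i hi => ?_, q * r, hq.mul hGf hcomm hr,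
      fun j hj => ?_, fun n => ?_⟩
    · rcases (Nat.lt_succ_iff_lt_or_eq.mp hi) with hi | rfl
      · simpa [hi.ne] using hc i hi
      · simpa using hrk
    · rcases (Nat.lt_succ_iff_lt_or_eq.mp hj) with hj | rfl
      · simp [q, hr1 j hj, zchoose_natCast, Nat.choose_eq_zero_of_lt hj]
      · simp [q, zchoose_natCast]
    · rw [taylorProd_succ, Function.update_self, hgr n,
        taylorProd_congr (c := Function.update c k (r k)) (d := c) fun i hi =>
          Function.update_of_ne hi.ne _ _]
      simp [q, mul_assoc]

lemma prod_map_finRange_eq_taylorProd (c : ℕ → G) (k : ℕ) (n : ℤ) :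
    ((List.finRange k).map fun i : Fin k => c i ^ zchoose n i.val).prod = taylorProd c k n := by
  rw [taylorProd, ← List.map_coe_finRange_eq_range, List.map_map]
  rfl

end TaylorProd

/-- Taylor expansion of a polynomial sequence with respect to a
prefiltration of degree at most `s`, with unique coefficients `gᵢ ∈ Gᵢ`. -/
theorem taylor_expansion_prefiltration {G : Type*} [Group G] (s : ℕ) (Gf : ℕ → Subgroup G)
    (hmono : ∀ i, Gf (i + 1) ≤ Gf i)
    (hbot : ∀ i, s < i → Gf i = ⊥)
    (hcomm : ∀ i j, ⁅Gf i, Gf j⁆ ≤ Gf (i + j))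
    (g : ℤ → G) (hg : IsPolySeq Gf g) :
    ∃! c : Fin (s + 1) → G, (∀ i, c i ∈ Gf i.val) ∧
      ∀ n : ℤ, g n = ((List.finRange (s + 1)).map (fun i => c i ^ zchoose n i.val)).prod := by
  obtain ⟨c, hc, r, hr, hr1, hgr⟩ :=
    exists_eq_taylorProd_mul (antitone_nat_of_succ_le hmono) hcomm hg (s + 1)
  have hr_one : r = 1 := hr.eq_one_of_forall_lt_eq_one (hbot (s + 1) (by omega)) hr1
  refine ⟨fun i => c i, ⟨fun i => hc i i.isLt, fun n => ?_⟩, ?_⟩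
  · rw [hgr n, hr_one, Pi.one_apply, mul_one, prod_map_finRange_eq_taylorProd]
  · rintro d ⟨-, hd⟩
    let d' : ℕ → G := fun j => if h : j < s + 1 then d ⟨j, h⟩ else 1
    have hd' : ∀ i : Fin (s + 1), d' i = d i := fun i => dif_pos i.isLt
    have hgd : ∀ n, g n = taylorProd d' (s + 1) n := fun n => by
      rw [hd n, ← prod_map_finRange_eq_taylorProd]
      simp only [hd']
    have heq := eq_of_taylorProd_eq (c := d') (d := c) fun j _ => by
      rw [← hgd, hgr, hr_one, Pi.one_apply, mul_one]
    exact funext fun i => by rw [← hd', heq i i.isLt]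
end

section
/- For any positive integer d, any positive integer N, and any function f : Z/NZ → [0,1], there exists a set A ⊆ Z/NZ such that ‖1_A − f‖_{U^d(Z/NZ)} ≤ C_d · N^{−1/2^d} for some constant C_d depending only on d. -/
/-- The Gowers uniformity norm `‖f‖_{U^d}` of `f : ℤ/N → ℂ`:
`‖f‖_{U^d}^{2^d} = 𝔼_{x, h₁, …, h_d} ∏_{ε ∈ {0,1}^d} C^{|ε|} f(x + ε·h)`. -/
noncomputable def gowersNorm (N d : ℕ) [NeZero N] (f : ZMod N → ℂ) : ℝ :=
  ((∑ x : ZMod N, ∑ h : Fin d → ZMod N,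
      (∏ ε : Fin d → Bool,
        (starRingEnd ℂ)^[(Finset.univ.filter (fun i => ε i)).card]
          (f (x + ∑ i, if ε i then h i else 0))).re) / (N : ℝ) ^ (d + 1))
    ^ ((1 : ℝ) / 2 ^ d)

open Finset

/-- The (unnormalised) real Gowers sum. -/
noncomputable def gSum (N d : ℕ) [NeZero N] (r : ZMod N → ℝ) : ℝ :=
  ∑ x : ZMod N, ∑ h : Fin d → ZMod N, ∏ ε : Fin d → Bool,
    r (x + ∑ i, if ε i then h i else 0)

lemma gSum_nonneg (N d : ℕ) [NeZero N] (hd : 0 < d) (r : ZMod N → ℝ) : 0 ≤ gSum N d r := by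
  obtain ⟨m, rfl⟩ : ∃ m, d = m + 1 := ⟨d - 1, (Nat.succ_pred_eq_of_pos hd).symm⟩
  set G : (Fin m → ZMod N) → ZMod N → ℝ := fun h' x =>
    ∏ ε' : Fin m → Bool, r (x + ∑ i, if ε' i then h' i else 0) with hG
  have h1 : ∀ (x h0 : ZMod N) (h' : Fin m → ZMod N),
      (∏ ε : Fin (m+1) → Bool, r (x + ∑ i, if ε i then (Fin.cons h0 h' : Fin (m+1) → ZMod N) i else 0))
      = G h' x * G h' (x + h0) := by
    intro x h0 h'
    rw [← (Fin.consEquiv (fun _ : Fin (m+1) => Bool)).prod_comp]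
    rw [Fintype.prod_prod_type, Fintype.prod_bool]
    have hs : ∀ (b : Bool) (ε' : Fin m → Bool),
        (∑ i, if (Fin.cons b ε' : Fin (m+1) → Bool) i then (Fin.cons h0 h' : Fin (m+1) → ZMod N) i else 0)
          = (if b then h0 else 0) + ∑ i : Fin m, if ε' i then h' i else 0 := by
      intro b ε'
      rw [Fin.sum_univ_succ]
      simp [Fin.cons_zero, Fin.cons_succ]
    simp only [Fin.consEquiv_apply]
    simp only [hs, if_true, if_false, zero_add, hG, ← add_assoc]
    rw [mul_comm]
    simp
  have key : gSum N (m + 1) r = ∑ h' : Fin m → ZMod N, (∑ x : ZMod N, G h' x) ^ 2 := by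
    have h2 : ∀ x : ZMod N, (∑ h : Fin (m+1) → ZMod N, ∏ ε : Fin (m+1) → Bool,
        r (x + ∑ i, if ε i then h i else 0))
        = ∑ h' : Fin m → ZMod N, G h' x * (∑ y : ZMod N, G h' y) := by
      intro x
      rw [← (Fin.consEquiv (fun _ : Fin (m+1) => ZMod N)).sum_comp]
      rw [Fintype.sum_prod_type, Finset.sum_comm]
      congr 1
      ext h'
      simp only [Fin.consEquiv_apply]
      simp only [h1 x _ h']
      rw [← Finset.mul_sum]
      congr 1
      exact Fintype.sum_equiv (Equiv.addLeft x) _ _ (fun y => rfl)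
    unfold gSum
    simp only [h2]
    rw [Finset.sum_comm]
    congr 1
    ext h'
    rw [← Finset.sum_mul, sq]
  rw [key]
  exact Finset.sum_nonneg fun h' _ => sq_nonneg _

/-- The Bernoulli product weight of a set `A`. -/
noncomputable def Wt {N : ℕ} [NeZero N] (f : ZMod N → ℝ) (A : Finset (ZMod N)) : ℝ :=
  (∏ x ∈ A, f x) * ∏ x ∈ Aᶜ, (1 - f x)

lemma Wt_nonneg {N : ℕ} [NeZero N] (f : ZMod N → ℝ) (hf : ∀ x, f x ∈ Set.Icc (0:ℝ) 1)
    (A : Finset (ZMod N)) : 0 ≤ Wt f A :=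
  mul_nonneg (Finset.prod_nonneg fun x _ => (hf x).1)
    (Finset.prod_nonneg fun x _ => by linarith [(hf x).2])

lemma sum_Wt {N : ℕ} [NeZero N] (f : ZMod N → ℝ) : ∑ A : Finset (ZMod N), Wt f A = 1 := by
  classical
  have : ∏ x : ZMod N, (f x + (1 - f x)) = ∑ A : Finset (ZMod N), Wt f A := by
    rw [Finset.prod_add, Finset.powerset_univ]
    exact Finset.sum_congr rfl fun A _ => by rw [Wt, Finset.compl_eq_univ_sdiff]
  rw [← this]
  simp

lemma key_indep {N : ℕ} [NeZero N] (f : ZMod N → ℝ) {ι : Type} [Fintype ι] [Nonempty ι]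
    [DecidableEq ι] (y : ι → ZMod N) (hy : Function.Injective y) :
    ∑ A : Finset (ZMod N), Wt f A * ∏ e, ((if y e ∈ A then (1:ℝ) else 0) - f (y e)) = 0 := by
  classical
  set I : Finset (ZMod N) := Finset.univ.image y with hI
  have h1 : ∀ A : Finset (ZMod N),
      Wt f A * ∏ e, ((if y e ∈ A then (1:ℝ) else 0) - f (y e))
      = (∏ x ∈ A, (f x * if x ∈ I then 1 - f x else 1))
        * ∏ x ∈ Aᶜ, ((1 - f x) * if x ∈ I then 0 - f x else 1) := by
    intro A
    have e1 : (∏ e, ((if y e ∈ A then (1:ℝ) else 0) - f (y e)))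
        = ∏ x ∈ I, ((if x ∈ A then (1:ℝ) else 0) - f x) := by
      rw [hI, Finset.prod_image (fun a _ b _ h => hy h)]
    have e2 : (∏ x ∈ I, ((if x ∈ A then (1:ℝ) else 0) - f x))
        = (∏ x ∈ I.filter (· ∈ A), (1 - f x)) * ∏ x ∈ I.filter (· ∉ A), (0 - f x) := by
      rw [← Finset.prod_ite]
      exact Finset.prod_congr rfl fun x _ => by split_ifs <;> ring
    have e3 : (∏ x ∈ A, (f x * if x ∈ I then 1 - f x else 1))
        = (∏ x ∈ A, f x) * ∏ x ∈ A.filter (· ∈ I), (1 - f x) := by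
      rw [Finset.prod_mul_distrib, Finset.prod_filter]
    have e4 : (∏ x ∈ Aᶜ, ((1 - f x) * if x ∈ I then 0 - f x else 1))
        = (∏ x ∈ Aᶜ, (1 - f x)) * ∏ x ∈ Aᶜ.filter (· ∈ I), (0 - f x) := by
      rw [Finset.prod_mul_distrib, Finset.prod_filter]
    have e5 : A.filter (· ∈ I) = I.filter (· ∈ A) := by
      ext x; simp [and_comm]
    have e6 : Aᶜ.filter (· ∈ I) = I.filter (· ∉ A) := by
      ext x; simp [and_comm]
    rw [e1, e2, e3, e4, e5, e6, Wt]
    ring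
  simp only [h1]
  have h2 : ∑ A : Finset (ZMod N),
      (∏ x ∈ A, (f x * if x ∈ I then 1 - f x else 1))
        * ∏ x ∈ Aᶜ, ((1 - f x) * if x ∈ I then 0 - f x else 1)
      = ∏ x : ZMod N, ((f x * if x ∈ I then 1 - f x else 1)
          + (1 - f x) * if x ∈ I then 0 - f x else 1) := by
    rw [Finset.prod_add, Finset.powerset_univ]
    exact Finset.sum_congr rfl fun A _ => by rw [Finset.compl_eq_univ_sdiff]
  rw [h2]
  obtain ⟨e0⟩ := ‹Nonempty ι›
  refine Finset.prod_eq_zero (Finset.mem_univ (y e0)) ?_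
  have : y e0 ∈ I := Finset.mem_image_of_mem y (Finset.mem_univ e0)
  rw [if_pos this, if_pos this]
  ring

lemma card_bad {N : ℕ} [NeZero N] (d : ℕ) :
    ((Finset.univ : Finset (Fin d → ZMod N)).filter (fun h => ¬ Function.Injective
      (fun ε : Fin d → Bool => ∑ i, if ε i then h i else 0))).card
      ≤ 4 ^ d * N ^ (d - 1) := by
  classical
  set H : (Fin d → Bool) × (Fin d → Bool) → Finset (Fin d → ZMod N) := fun p =>
    if p.1 = p.2 then ∅ else Finset.univ.filter
      (fun h => (∑ i, if p.1 i then h i else 0) = ∑ i, if p.2 i then h i else 0) with hH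
  have hsub : (Finset.univ : Finset (Fin d → ZMod N)).filter (fun h => ¬ Function.Injective
      (fun ε : Fin d → Bool => ∑ i, if ε i then h i else 0))
      ⊆ Finset.univ.biUnion H := by
    intro h hh
    rw [Finset.mem_filter] at hh
    rw [Function.Injective] at hh
    push_neg at hh
    obtain ⟨_, ε, ε', heq, hne⟩ := hh
    refine Finset.mem_biUnion.2 ⟨(ε, ε'), Finset.mem_univ _, ?_⟩
    rw [hH]
    simp only [if_neg hne]
    exact Finset.mem_filter.2 ⟨Finset.mem_univ _, heq⟩
  have hcard : ∀ p : (Fin d → Bool) × (Fin d → Bool), (H p).card ≤ N ^ (d - 1) := by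
    intro ⟨ε, ε'⟩
    by_cases hne : ε = ε'
    · simp [hH, hne]
    · have hHp : H (ε, ε') = Finset.univ.filter
          (fun h => (∑ i, if ε i then h i else 0) = ∑ i, if ε' i then h i else 0) := by
        simp [hH, hne]
      rw [hHp]
      obtain ⟨i0, hi0⟩ := Function.ne_iff.1 hne
      set c : Fin d → ZMod N := fun i => (if ε i then 1 else 0) - (if ε' i then 1 else 0) with hc
      have hcond : ∀ h : Fin d → ZMod N,
          ((∑ i, if ε i then h i else 0) = ∑ i, if ε' i then h i else 0) ↔
          (∑ i, c i * h i) = 0 := by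
        intro h
        rw [hc]
        constructor
        · intro he
          have : ∑ i, ((if ε i then (1:ZMod N) else 0) - if ε' i then 1 else 0) * h i
              = (∑ i, if ε i then h i else 0) - ∑ i, if ε' i then h i else 0 := by
            rw [← Finset.sum_sub_distrib]
            exact Finset.sum_congr rfl fun i _ => by split_ifs <;> ring
          rw [this, he, sub_self]
        · intro he
          have : ∑ i, ((if ε i then (1:ZMod N) else 0) - if ε' i then 1 else 0) * h i
              = (∑ i, if ε i then h i else 0) - ∑ i, if ε' i then h i else 0 := by
            rw [← Finset.sum_sub_distrib]
            exact Finset.sum_congr rfl fun i _ => by split_ifs <;> ring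
          rw [this] at he
          exact sub_eq_zero.1 he
      have hinj : Set.InjOn (fun (h : Fin d → ZMod N) (i : {i : Fin d // i ≠ i0}) => h i.1)
          ↑((Finset.univ : Finset (Fin d → ZMod N)).filter
            (fun h => (∑ i, if ε i then h i else 0) = ∑ i, if ε' i then h i else 0)) := by
        intro h hh g hg hfg
        simp only [Finset.coe_filter, Set.mem_setOf_eq] at hh hg
        rw [hcond] at hh hg
        have hoff : ∀ i : Fin d, i ≠ i0 → h i = g i := by
          intro i hi
          exact congrFun hfg ⟨i, hi⟩
        have hsum : ∑ i, c i * (h i - g i) = 0 := by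
          have : ∀ i, c i * (h i - g i) = c i * h i - c i * g i := fun i => by ring
          simp only [this, Finset.sum_sub_distrib, hh.2, hg.2, sub_self]
        have hsingle : ∑ i, c i * (h i - g i) = c i0 * (h i0 - g i0) := by
          refine Finset.sum_eq_single i0 (fun i _ hi => ?_)
            (fun habs => absurd (Finset.mem_univ i0) habs)
          rw [hoff i hi, sub_self, mul_zero]
        rw [hsingle] at hsum
        have hc0 : c i0 = 1 ∨ c i0 = -1 := by
          rw [hc]
          rcases Bool.eq_false_or_eq_true (ε i0) with h1 | h1 <;>
            rcases Bool.eq_false_or_eq_true (ε' i0) with h2 | h2 <;>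
            simp [h1, h2] at hi0 ⊢
        have hii : h i0 = g i0 := by
          rcases hc0 with h1 | h1 <;> rw [h1] at hsum
          · rwa [one_mul, sub_eq_zero] at hsum
          · rw [neg_mul, neg_eq_zero, one_mul, sub_eq_zero] at hsum; exact hsum
        funext i
        by_cases hi : i = i0
        · rw [hi]; exact hii
        · exact hoff i hi
      have := Finset.card_le_card_of_injOn _ (fun h _ => Finset.mem_univ
        (α := {i : Fin d // i ≠ i0} → ZMod N) _) hinj
      calc _ ≤ (Finset.univ : Finset ({i : Fin d // i ≠ i0} → ZMod N)).card := this
        _ = N ^ (d - 1) := by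
          rw [Finset.card_univ, Fintype.card_fun, ZMod.card]
          congr 1
          rw [Fintype.card_subtype_compl, Fintype.card_subtype_eq, Fintype.card_fin]
  calc _ ≤ (Finset.univ.biUnion H).card := Finset.card_le_card hsub
    _ ≤ ∑ p : (Fin d → Bool) × (Fin d → Bool), (H p).card := Finset.card_biUnion_le
    _ ≤ ∑ _p : (Fin d → Bool) × (Fin d → Bool), N ^ (d - 1) :=
        Finset.sum_le_sum fun p _ => hcard p
    _ = 4 ^ d * N ^ (d - 1) := by
      rw [Finset.sum_const, Finset.card_univ, Fintype.card_prod, Fintype.card_fun,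
        Fintype.card_fin, Fintype.card_bool, smul_eq_mul]
      congr 1
      rw [← mul_pow]
      norm_num

lemma exists_good_A {N : ℕ} [NeZero N] (d : ℕ) (hd : 0 < d) (f : ZMod N → ℝ)
    (hf : ∀ x, f x ∈ Set.Icc (0:ℝ) 1) :
    ∃ A : Finset (ZMod N),
      gSum N d (fun x => (if x ∈ A then (1:ℝ) else 0) - f x) ≤ 4 ^ d * (N:ℝ) ^ d := by
  classical
  set S : Finset (ZMod N) → ℝ := fun A => gSum N d (fun x => (if x ∈ A then (1:ℝ) else 0) - f x)
    with hS
  -- the expectation bound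
  have hexp : ∑ A : Finset (ZMod N), Wt f A * S A ≤ 4 ^ d * (N:ℝ) ^ d := by
    have hswap : ∑ A : Finset (ZMod N), Wt f A * S A
        = ∑ x : ZMod N, ∑ h : Fin d → ZMod N, ∑ A : Finset (ZMod N),
            Wt f A * ∏ ε : Fin d → Bool,
              ((if x + (∑ i, if ε i then h i else 0) ∈ A then (1:ℝ) else 0)
                - f (x + ∑ i, if ε i then h i else 0)) := by
      simp only [hS, gSum, Finset.mul_sum]
      rw [Finset.sum_comm]
      exact Finset.sum_congr rfl fun x _ => Finset.sum_comm
    rw [hswap]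
    set B : Finset (Fin d → ZMod N) := Finset.univ.filter (fun h => ¬ Function.Injective
      (fun ε : Fin d → Bool => ∑ i, if ε i then h i else 0)) with hB
    have hterm : ∀ (x : ZMod N) (h : Fin d → ZMod N),
        (∑ A : Finset (ZMod N), Wt f A * ∏ ε : Fin d → Bool,
          ((if x + (∑ i, if ε i then h i else 0) ∈ A then (1:ℝ) else 0)
            - f (x + ∑ i, if ε i then h i else 0))) ≤ 1 := by
      intro x h
      calc _ ≤ ∑ A : Finset (ZMod N), Wt f A * 1 := by
              refine Finset.sum_le_sum fun A _ => ?_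
              refine mul_le_mul_of_nonneg_left ?_ (Wt_nonneg f hf A)
              have habs : |∏ ε : Fin d → Bool,
                  ((if x + (∑ i, if ε i then h i else 0) ∈ A then (1:ℝ) else 0)
                    - f (x + ∑ i, if ε i then h i else 0))| ≤ 1 := by
                rw [Finset.abs_prod]
                refine Finset.prod_le_one (fun ε _ => abs_nonneg _) (fun ε _ => ?_)
                set z := x + ∑ i, if ε i then h i else 0
                have := hf z
                rw [abs_le]
                constructor <;> split_ifs <;> simp at this ⊢ <;> linarith [this.1, this.2]
              exact (le_abs_self _).trans habs
        _ = 1 := by rw [← Finset.sum_mul, sum_Wt, one_mul]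
    have hzero : ∀ (x : ZMod N) (h : Fin d → ZMod N), h ∉ B →
        (∑ A : Finset (ZMod N), Wt f A * ∏ ε : Fin d → Bool,
          ((if x + (∑ i, if ε i then h i else 0) ∈ A then (1:ℝ) else 0)
            - f (x + ∑ i, if ε i then h i else 0))) = 0 := by
      intro x h hhB
      rw [hB, Finset.mem_filter, not_and, not_not] at hhB
      have hinj : Function.Injective
          (fun ε : Fin d → Bool => x + ∑ i, if ε i then h i else 0) := by
        intro a b hab
        exact hhB (Finset.mem_univ h) (add_left_cancel hab)
      exact key_indep f _ hinj
    calc _ ≤ ∑ _x : ZMod N, ((4:ℝ) ^ d * (N:ℝ) ^ (d - 1)) := by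
          refine Finset.sum_le_sum fun x _ => ?_
          have hrestrict : ∑ h : Fin d → ZMod N, (∑ A : Finset (ZMod N), Wt f A *
              ∏ ε : Fin d → Bool,
                ((if x + (∑ i, if ε i then h i else 0) ∈ A then (1:ℝ) else 0)
                  - f (x + ∑ i, if ε i then h i else 0)))
              = ∑ h ∈ B, (∑ A : Finset (ZMod N), Wt f A * ∏ ε : Fin d → Bool,
                ((if x + (∑ i, if ε i then h i else 0) ∈ A then (1:ℝ) else 0)
                  - f (x + ∑ i, if ε i then h i else 0))) :=
            (Finset.sum_subset (Finset.subset_univ B) (fun h _ hh => hzero x h hh)).symm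
          rw [hrestrict]
          calc _ ≤ ∑ _h ∈ B, (1:ℝ) := Finset.sum_le_sum fun h _ => hterm x h
            _ = (B.card : ℝ) := by rw [Finset.sum_const, nsmul_eq_mul, mul_one]
            _ ≤ ((4 ^ d * N ^ (d - 1) : ℕ) : ℝ) := by exact_mod_cast card_bad d
            _ = (4:ℝ) ^ d * (N:ℝ) ^ (d - 1) := by push_cast; ring
      _ ≤ 4 ^ d * (N:ℝ) ^ d := by
          rw [Finset.sum_const, Finset.card_univ, ZMod.card, nsmul_eq_mul]
          have : (N:ℝ) * (4 ^ d * (N:ℝ) ^ (d - 1)) = 4 ^ d * (N:ℝ) ^ (d - 1 + 1) := by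
            rw [pow_succ]; ring
          rw [this, Nat.sub_add_cancel hd]
  -- pick a good A
  by_contra hcon
  push_neg at hcon
  have hWpos : ∃ A₀ : Finset (ZMod N), 0 < Wt f A₀ := by
    by_contra hW
    push_neg at hW
    have : ∑ A : Finset (ZMod N), Wt f A ≤ 0 :=
      Finset.sum_nonpos fun A _ => hW A
    rw [sum_Wt] at this
    linarith
  obtain ⟨A₀, hA₀⟩ := hWpos
  have hlt : ∑ A : Finset (ZMod N), Wt f A * (4 ^ d * (N:ℝ) ^ d)
      < ∑ A : Finset (ZMod N), Wt f A * S A := by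
    refine Finset.sum_lt_sum (fun A _ => ?_) ⟨A₀, Finset.mem_univ A₀, ?_⟩
    · exact mul_le_mul_of_nonneg_left (hcon A).le (Wt_nonneg f hf A)
    · exact mul_lt_mul_of_pos_left (hcon A₀) hA₀
  rw [← Finset.sum_mul, sum_Wt, one_mul] at hlt
  linarith

/-- any `f : ℤ/N → [0,1]` can be approximated in the `U^d` norm by the
indicator of a set `A ⊆ ℤ/N`, with error `≤ C_d · N^{−1/2^d}`. -/
theorem exists_indicator_close_in_gowers_norm (d : ℕ) (hd : 0 < d) :
    ∃ C : ℝ, 0 < C ∧ ∀ (N : ℕ) [NeZero N] (f : ZMod N → ℝ),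
      (∀ x, f x ∈ Set.Icc (0 : ℝ) 1) →
      ∃ A : Finset (ZMod N),
        gowersNorm N d (fun x => (if x ∈ A then (1 : ℂ) else 0) - (f x : ℂ))
          ≤ C * (N : ℝ) ^ (-(1 : ℝ) / 2 ^ d) := by
  refine ⟨((4:ℝ) ^ d) ^ ((1:ℝ) / 2 ^ d), Real.rpow_pos_of_pos (by positivity) _, ?_⟩
  intro N _ f hf
  obtain ⟨A, hA⟩ := exists_good_A d hd f hf
  refine ⟨A, ?_⟩
  set g : ZMod N → ℝ := fun x => (if x ∈ A then (1:ℝ) else 0) - f x with hg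
  have hN : (0:ℝ) < N := by
    exact_mod_cast Nat.pos_of_ne_zero (NeZero.ne N)
  have hre : gowersNorm N d (fun x => (if x ∈ A then (1 : ℂ) else 0) - (f x : ℂ))
      = (gSum N d g / (N : ℝ) ^ (d + 1)) ^ ((1:ℝ) / 2 ^ d) := by
    unfold gowersNorm gSum
    congr 2
    refine Finset.sum_congr rfl fun x _ => Finset.sum_congr rfl fun h _ => ?_
    have hfun : ∀ z : ZMod N, (if z ∈ A then (1:ℂ) else 0) - (f z : ℂ) = ((g z : ℝ) : ℂ) := by
      intro z
      rw [hg]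
      split_ifs with hz <;> simp [hz]
    simp only [hfun]
    have hconj : ∀ (k : ℕ) (z : ZMod N), (starRingEnd ℂ)^[k] ((g z : ℝ) : ℂ) = ((g z : ℝ) : ℂ) :=
      fun k z => Function.iterate_fixed (Complex.conj_ofReal _) k
    simp only [hconj]
    rw [← Complex.ofReal_prod, Complex.ofReal_re]
  rw [hre]
  have hbase : gSum N d g / (N : ℝ) ^ (d + 1) ≤ (4:ℝ) ^ d / N := by
    have h1 : gSum N d g / (N : ℝ) ^ (d + 1) ≤ (4 ^ d * (N:ℝ) ^ d) / (N : ℝ) ^ (d + 1) := by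
      gcongr
    have h2 : (4 ^ d * (N:ℝ) ^ d) / (N : ℝ) ^ (d + 1) = (4:ℝ) ^ d / N := by
      rw [pow_succ]
      field_simp
    linarith [h1, h2.symm.le]
  have h0 : 0 ≤ gSum N d g / (N : ℝ) ^ (d + 1) :=
    div_nonneg (gSum_nonneg N d hd g) (by positivity)
  calc (gSum N d g / (N : ℝ) ^ (d + 1)) ^ ((1:ℝ) / 2 ^ d)
      ≤ ((4:ℝ) ^ d / N) ^ ((1:ℝ) / 2 ^ d) :=
        Real.rpow_le_rpow h0 hbase (by positivity)
    _ = ((4:ℝ) ^ d) ^ ((1:ℝ) / 2 ^ d) * (N : ℝ) ^ (-(1 : ℝ) / 2 ^ d) := by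
        rw [Real.div_rpow (by positivity) (Nat.cast_nonneg N)]
        rw [neg_div, Real.rpow_neg (Nat.cast_nonneg N)]
        rw [div_eq_mul_inv]
end

section
/- Let p be a prime, k an integer with k mod p of multiplicative order n in (Z/pZ)^×, and let H = {k^j mod p : 1 ≤ j ≤ n} be the subgroup generated by k. Let E = {k^{2j} : 1 ≤ j ≤ ⌊n/2⌋} ⊆ H, and let y₁,…,y_m be coset representatives of H in (Z/pZ)^×, where m = (p−1)/n. Define A = ⋃_{j=1}^m y_j · E. Then A ∩ (k·A) = ∅ and |A| = m·⌊n/2⌋ ≥ (p−1)/2 − m. -/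
/-!
Write `n` for the order of `u`. The set `E` consists of the even powers `u^2, …, u^(2⌊n/2⌋)` and
`u·E` of the odd powers `u^3, …, u^(2⌊n/2⌋+1)`. All these exponents lie in the window `[2, n + 2)`
of length `n`, on which `i ↦ u^i` is injective, so parity keeps `E` and `u·E` apart and `|E| = ⌊n/2⌋`.
Translates of `E` by distinct coset representatives lie in distinct cosets of `⟨u⟩`, which gives
both `A ∩ u·A = ∅` and `|A| = m·⌊n/2⌋`; finally `m·n = p − 1` yields the lower bound.
-/

open Finset

section Group

variable {G : Type*} [Group G]

lemma pow_injOn_Ico_orderOf (x : G) (c : ℕ) :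
    (Set.Ico c (c + orderOf x)).InjOn (x ^ ·) := by
  rintro a ⟨hca, hac⟩ b ⟨hcb, hbc⟩ hab
  have hsub : x ^ (a - c) = x ^ (b - c) := by
    simp only at hab
    rwa [← Nat.sub_add_cancel hca, ← Nat.sub_add_cancel hcb, pow_add, pow_add,
      mul_left_inj] at hab
  have := pow_injOn_Iio_orderOf (x := x) (by simp only [Set.mem_Iio]; omega)
    (by simp only [Set.mem_Iio]; omega) hsub
  omega

lemma eq_of_mul_pow_eq_mul_pow {ι : Type*} {y : ι → G} {u : G}
    (hy : ∀ g j j', (y j)⁻¹ * g ∈ Subgroup.zpowers u → (y j')⁻¹ * g ∈ Subgroup.zpowers u →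
      j = j')
    {j j' : ι} {a b : ℕ} (h : y j * u ^ a = y j' * u ^ b) : j = j' :=
  hy (y j * u ^ a) j j' (by simp [Subgroup.npow_mem_zpowers])
    (by simp [h, Subgroup.npow_mem_zpowers])

end Group

section CommGroup

variable {G ι : Type*} [CommGroup G] [DecidableEq G] [Fintype ι]

/-- The set `A = ⋃ⱼ yⱼ·E` with `E = {u^(2i) : 1 ≤ i ≤ ⌊n/2⌋}`. -/
def cosetEvenPowers (y : ι → G) (u : G) (n : ℕ) : Finset G :=
  univ.biUnion fun j => (Icc 1 (n / 2)).image fun i : ℕ => y j * u ^ (2 * i)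

variable {y : ι → G} {u : G}

lemma mem_cosetEvenPowers {n : ℕ} {a : G} :
    a ∈ cosetEvenPowers y u n ↔ ∃ j, ∃ i ∈ Icc 1 (n / 2), y j * u ^ (2 * i) = a := by
  simp [cosetEvenPowers]

variable (hy : ∀ g j j', (y j)⁻¹ * g ∈ Subgroup.zpowers u → (y j')⁻¹ * g ∈ Subgroup.zpowers u →
  j = j')
include hy

lemma mul_notMem_cosetEvenPowers {a : G} (ha : a ∈ cosetEvenPowers y u (orderOf u)) :
    u * a ∉ cosetEvenPowers y u (orderOf u) := by
  obtain ⟨j, i, hi, rfl⟩ := mem_cosetEvenPowers.1 ha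
  intro hmem
  obtain ⟨j', i', hi', heq⟩ := mem_cosetEvenPowers.1 hmem
  rw [mem_Icc] at hi hi'
  have heq' : y j' * u ^ (2 * i') = y j * u ^ (2 * i + 1) := by
    rw [heq, pow_succ', mul_left_comm]
  obtain rfl := eq_of_mul_pow_eq_mul_pow hy heq'
  have := pow_injOn_Ico_orderOf u 2 (by simp only [Set.mem_Ico]; omega)
    (by simp only [Set.mem_Ico]; omega) (mul_left_cancel heq')
  omega

lemma card_cosetEvenPowers :
    #(cosetEvenPowers y u (orderOf u)) = Fintype.card ι * (orderOf u / 2) := by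
  rw [cosetEvenPowers, card_biUnion, sum_const_nat, card_univ]
  · intro j _
    rw [card_image_of_injOn, Nat.card_Icc, Nat.add_sub_cancel]
    intro i hi i' hi' h
    simp only [coe_Icc, Set.mem_Icc] at hi hi'
    have := pow_injOn_Ico_orderOf u 2 (by simp only [Set.mem_Ico]; omega)
      (by simp only [Set.mem_Ico]; omega) (mul_left_cancel h)
    omega
  · intro j _ j' _ hjj'
    simp only [disjoint_left, mem_image]
    rintro _ ⟨i, -, rfl⟩ ⟨i', -, heq⟩
    exact hjj' (eq_of_mul_pow_eq_mul_pow hy heq).symm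

end CommGroup

lemma Nat.mul_div_two_le_mul_div_two_add (m n : ℕ) : m * n / 2 ≤ m * (n / 2) + m := by
  have hn : m * n = 2 * (m * (n / 2)) + m * (n % 2) := by
    conv_lhs => rw [← Nat.div_add_mod n 2]
    ring
  have hmod : m * (n % 2) ≤ m := mul_le_of_le_one_right (Nat.zero_le m) (by omega)
  omega

theorem dilate_free_set_from_cosets_general (p : ℕ) (u : (ZMod p)ˣ)
    (n : ℕ) (hn : orderOf u = n)
    (m : ℕ) (hm : m * n = p - 1) (y : Fin m → (ZMod p)ˣ)
    (hreps : ∀ g : (ZMod p)ˣ, ∃! j : Fin m, (y j)⁻¹ * g ∈ Subgroup.zpowers u) :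
    (∀ a ∈ (Finset.univ : Finset (Fin m)).biUnion
        (fun j => (Finset.Icc 1 (n / 2)).image (fun i : ℕ => y j * u ^ (2 * i))),
      u * a ∉ (Finset.univ : Finset (Fin m)).biUnion
        (fun j => (Finset.Icc 1 (n / 2)).image (fun i : ℕ => y j * u ^ (2 * i))))
    ∧ ((Finset.univ : Finset (Fin m)).biUnion
        (fun j => (Finset.Icc 1 (n / 2)).image (fun i : ℕ => y j * u ^ (2 * i)))).card
        = m * (n / 2)
    ∧ (p - 1) / 2 - m ≤ m * (n / 2) := by
  subst hn
  have hy : ∀ g j j', (y j)⁻¹ * g ∈ Subgroup.zpowers u → (y j')⁻¹ * g ∈ Subgroup.zpowers u →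
      j = j' := fun g _ _ => (hreps g).unique
  refine ⟨fun a ha => mul_notMem_cosetEvenPowers hy ha, ?_, ?_⟩
  · exact (card_cosetEvenPowers hy).trans (by rw [Fintype.card_fin])
  · have := Nat.mul_div_two_le_mul_div_two_add m (orderOf u)
    omega

/-- let `p` be prime, `u` the class of `k` in `(ℤ/p)ˣ` with multiplicative
order `n ≥ 2`, `H = ⟨u⟩`, `E = {u^{2j} : 1 ≤ j ≤ ⌊n/2⌋}`, and `y₁, …, y_m` coset
representatives of `H` in `(ℤ/p)ˣ` (so `m·n = p − 1`). Then
`A = ⋃_j y_j·E` satisfies `A ∩ (u·A) = ∅` and `|A| = m·⌊n/2⌋ ≥ (p−1)/2 − m`. -/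
theorem dilate_free_set_from_cosets (p : ℕ) (hp : p.Prime) (k : ℤ) (u : (ZMod p)ˣ)
    (hu : (u : ZMod p) = (k : ZMod p)) (n : ℕ) (hn : orderOf u = n) (hn2 : 2 ≤ n)
    (m : ℕ) (hm : m * n = p - 1) (y : Fin m → (ZMod p)ˣ)
    (hreps : ∀ g : (ZMod p)ˣ, ∃! j : Fin m, (y j)⁻¹ * g ∈ Subgroup.zpowers u) :
    (∀ a ∈ (Finset.univ : Finset (Fin m)).biUnion
        (fun j => (Finset.Icc 1 (n / 2)).image (fun i : ℕ => y j * u ^ (2 * i))),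
      u * a ∉ (Finset.univ : Finset (Fin m)).biUnion
        (fun j => (Finset.Icc 1 (n / 2)).image (fun i : ℕ => y j * u ^ (2 * i))))
    ∧ ((Finset.univ : Finset (Fin m)).biUnion
        (fun j => (Finset.Icc 1 (n / 2)).image (fun i : ℕ => y j * u ^ (2 * i)))).card
        = m * (n / 2)
    ∧ (p - 1) / 2 - m ≤ m * (n / 2) :=
  dilate_free_set_from_cosets_general p u n hn m hm y hreps
end
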